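/- The rational functions γ₁, γ₂ rescale under the explicit actions e₁^c, e₂^c according to the Cartan matrix of type D₄⁽³⁾: for all c ∈ ℂ^× and all x ∈ (ℂ^×)⁶ where the expressions are defined, γ₁(e₁^c(x)) = c²·γ₁(x), γ₂(e₁^c(x)) = c^{−3}·γ₂(x), γ₁(e₂^c(x)) = c^{−1}·γ₁(x), and γ₂(e₂^c(x)) = c²·γ₂(x), where γ₁(x) = x₁²x₃²x₅²/(x₀x₂x₄) and γ₂(x) = x₂²x₄²/(x₁³x₃³x₅³). -/

import Mathlib

noncomputable section

/-- Denominator of 𝒞₁ (also the function ε₁): x₀/x₁ + x₀x₂/(x₁²x₃) + x₀x₂x₄/(x₁²x₃²x₅). -/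
def s1 (x : Fin 6 → ℂ) : ℂ :=
  x 0 / x 1 + x 0 * x 2 / ((x 1) ^ 2 * x 3) + x 0 * x 2 * x 4 / ((x 1) ^ 2 * (x 3) ^ 2 * x 5)

/-- Numerator of 𝒞₁ = denominator of 𝒞₃. -/
def d3 (c : ℂ) (x : Fin 6 → ℂ) : ℂ :=
  c * x 0 / x 1 + x 0 * x 2 / ((x 1) ^ 2 * x 3) + x 0 * x 2 * x 4 / ((x 1) ^ 2 * (x 3) ^ 2 * x 5)

/-- Numerator of 𝒞₃ = denominator of 𝒞₅. -/
def d5 (c : ℂ) (x : Fin 6 → ℂ) : ℂ :=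
  c * x 0 / x 1 + c * x 0 * x 2 / ((x 1) ^ 2 * x 3)
    + x 0 * x 2 * x 4 / ((x 1) ^ 2 * (x 3) ^ 2 * x 5)

/-- 𝒞₁, 𝒞₃, 𝒞₅. -/
def C1 (c : ℂ) (x : Fin 6 → ℂ) : ℂ := d3 c x / s1 x
def C3 (c : ℂ) (x : Fin 6 → ℂ) : ℂ := d5 c x / d3 c x
def C5 (c : ℂ) (x : Fin 6 → ℂ) : ℂ := c * s1 x / d5 c x

/-- Denominator of 𝒞₂ (also the function ε₂): x₁³/x₂ + x₁³x₃³/(x₂²x₄). -/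
def s2 (x : Fin 6 → ℂ) : ℂ :=
  (x 1) ^ 3 / x 2 + (x 1) ^ 3 * (x 3) ^ 3 / ((x 2) ^ 2 * x 4)

/-- Numerator of 𝒞₂ = denominator of 𝒞₄. -/
def d4 (c : ℂ) (x : Fin 6 → ℂ) : ℂ :=
  c * (x 1) ^ 3 / x 2 + (x 1) ^ 3 * (x 3) ^ 3 / ((x 2) ^ 2 * x 4)

/-- 𝒞₂, 𝒞₄. -/
def C2 (c : ℂ) (x : Fin 6 → ℂ) : ℂ := d4 c x / s2 x
def C4 (c : ℂ) (x : Fin 6 → ℂ) : ℂ := c * s2 x / d4 c x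

/-- The action e₁^c(x) := (x₀, 𝒞₁x₁, x₂, 𝒞₃x₃, x₄, 𝒞₅x₅). -/
def e1act (c : ℂ) (x : Fin 6 → ℂ) : Fin 6 → ℂ :=
  ![x 0, C1 c x * x 1, x 2, C3 c x * x 3, x 4, C5 c x * x 5]

/-- The action e₂^c(x) := (x₀, x₁, 𝒞₂x₂, x₃, 𝒞₄x₄, x₅). -/
def e2act (c : ℂ) (x : Fin 6 → ℂ) : Fin 6 → ℂ :=
  ![x 0, x 1, C2 c x * x 2, x 3, C4 c x * x 4, x 5]

/-- γ₁(x) = x₁²x₃²x₅²/(x₀x₂x₄). -/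
def gamma1 (x : Fin 6 → ℂ) : ℂ :=
  (x 1) ^ 2 * (x 3) ^ 2 * (x 5) ^ 2 / (x 0 * x 2 * x 4)

/-- γ₂(x) = x₂²x₄²/(x₁³x₃³x₅³). -/
def gamma2 (x : Fin 6 → ℂ) : ℂ :=
  (x 2) ^ 2 * (x 4) ^ 2 / ((x 1) ^ 3 * (x 3) ^ 3 * (x 5) ^ 3)

/-! The products 𝒞₁𝒞₃𝒞₅ and 𝒞₂𝒞₄ telescope to `c`, and γ₁, γ₂ are Laurent monomials whose
total degrees in (x₁, x₃, x₅) and in (x₂, x₄) are the entries of the Cartan matrix. -/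

section Rescaling

variable (x : Fin 6 → ℂ) (a b d : ℂ)

theorem gamma1_rescale_odd :
    gamma1 ![x 0, a * x 1, x 2, b * x 3, x 4, d * x 5] = (a * b * d) ^ 2 * gamma1 x := by
  simp only [gamma1, Matrix.cons_val]
  ring

theorem gamma2_rescale_odd :
    gamma2 ![x 0, a * x 1, x 2, b * x 3, x 4, d * x 5] = ((a * b * d) ^ 3)⁻¹ * gamma2 x := by
  simp only [gamma2, Matrix.cons_val]
  ring

theorem gamma1_rescale_even :
    gamma1 ![x 0, x 1, a * x 2, x 3, b * x 4, x 5] = (a * b)⁻¹ * gamma1 x := by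
  simp only [gamma1, Matrix.cons_val]
  ring

theorem gamma2_rescale_even :
    gamma2 ![x 0, x 1, a * x 2, x 3, b * x 4, x 5] = (a * b) ^ 2 * gamma2 x := by
  simp only [gamma2, Matrix.cons_val]
  ring

end Rescaling

theorem C1_mul_C3_mul_C5 {c : ℂ} {x : Fin 6 → ℂ} (hs1 : s1 x ≠ 0) (hd3 : d3 c x ≠ 0)
    (hd5 : d5 c x ≠ 0) : C1 c x * C3 c x * C5 c x = c := by
  unfold C1 C3 C5
  field_simp

theorem C2_mul_C4 {c : ℂ} {x : Fin 6 → ℂ} (hs2 : s2 x ≠ 0) (hd4 : d4 c x ≠ 0) :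
    C2 c x * C4 c x = c := by
  unfold C2 C4
  field_simp

theorem gamma_rescale_cartan_general (c : ℂ) (x : Fin 6 → ℂ)
    (hs1 : s1 x ≠ 0) (hd3 : d3 c x ≠ 0) (hd5 : d5 c x ≠ 0)
    (hs2 : s2 x ≠ 0) (hd4 : d4 c x ≠ 0) :
    gamma1 (e1act c x) = c ^ 2 * gamma1 x ∧
    gamma2 (e1act c x) = (c ^ 3)⁻¹ * gamma2 x ∧
    gamma1 (e2act c x) = c⁻¹ * gamma1 x ∧
    gamma2 (e2act c x) = c ^ 2 * gamma2 x := by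
  have h₁ := C1_mul_C3_mul_C5 hs1 hd3 hd5
  have h₂ := C2_mul_C4 hs2 hd4
  exact ⟨by rw [e1act, gamma1_rescale_odd, h₁], by rw [e1act, gamma2_rescale_odd, h₁],
    by rw [e2act, gamma1_rescale_even, h₂], by rw [e2act, gamma2_rescale_even, h₂]⟩

/-- γ₁, γ₂ rescale under e₁^c, e₂^c according to the Cartan
matrix of type D₄⁽³⁾: γ₁(e₁^c(x)) = c²γ₁(x), γ₂(e₁^c(x)) = c⁻³γ₂(x),
γ₁(e₂^c(x)) = c⁻¹γ₁(x), γ₂(e₂^c(x)) = c²γ₂(x). -/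
theorem gamma_rescale_cartan (c : ℂ) (hc : c ≠ 0) (x : Fin 6 → ℂ) (hx : ∀ i, x i ≠ 0)
    (hs1 : s1 x ≠ 0) (hd3 : d3 c x ≠ 0) (hd5 : d5 c x ≠ 0)
    (hs2 : s2 x ≠ 0) (hd4 : d4 c x ≠ 0) :
    gamma1 (e1act c x) = c ^ 2 * gamma1 x ∧
    gamma2 (e1act c x) = (c ^ 3)⁻¹ * gamma2 x ∧
    gamma1 (e2act c x) = c⁻¹ * gamma1 x ∧
    gamma2 (e2act c x) = c ^ 2 * gamma2 x :=
  gamma_rescale_cartan_general c x hs1 hd3 hd5 hs2 hd4
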